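/- arXiv:math/0603353 — 2 statements merged into one kernel-verified Lean document; each statement's English description precedes it below -/
import Mathlib

section
/- Let ρ and ρ' be configurations on (I,J) such that ρ ≠ ρ', ρ ⊀ ρ', ρ' ⊀ ρ, and such that for every block B of ρ and every block B' of ρ' one has B ⊆ B', or B' ⊆ B, or B ∩ B' = ∅. Let ρ̃ be the set of those members of ρ ∪ ρ' that are maximal with respect to inclusion. Then ρ̃ is a configuration on (I,J), ρ̃ ≺ ρ, and ρ̃ ≺ ρ'. -/
/-- A configuration on the pair of disjoint finite sets `(I, J)`: a nonempty finite
collection of blocks, each a subset of `I ∪ J` with at least 2 elements and at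
least one element of `I`, the blocks being pairwise disjoint. -/
def IsConfig {α : Type*} [DecidableEq α] (I J : Finset α) (ρ : Finset (Finset α)) : Prop :=
  ρ.Nonempty ∧ (∀ B ∈ ρ, B ⊆ I ∪ J) ∧
    (∀ B ∈ ρ, ∀ B' ∈ ρ, B ≠ B' → Disjoint B B') ∧
    (∀ B ∈ ρ, 2 ≤ B.card) ∧ (∀ B ∈ ρ, (B ∩ I).Nonempty)

/-- `ConfigLT ρ' ρ` means `ρ' ≺ ρ`: the configurations differ and every block of
`ρ` is contained in some block of `ρ'`. -/
def ConfigLT {α : Type*} (ρ' ρ : Finset (Finset α)) : Prop :=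
  ρ' ≠ ρ ∧ ∀ B ∈ ρ, ∃ B' ∈ ρ', B ⊆ B'

/-!
Any two members of `ρ ∪ ρ'` are nested or disjoint, so the maximal ones are pairwise disjoint
and inherit the remaining block conditions: `ρ̃` is a configuration. Every block of `ρ` and of
`ρ'` lies in a maximal one, so `ρ̃` is coarser than both; and `ρ̃ = ρ` would make `ρ` coarser
than `ρ'`, i.e. `ρ ≺ ρ'`, which is excluded (likewise for `ρ'`).
-/

theorem Finset.exists_le_of_forall_mem_iff_maximal {β : Type*} [PartialOrder β]
    {s t : Finset β} (ht : ∀ b, b ∈ t ↔ b ∈ s ∧ ∀ c ∈ s, b ≤ c → b = c)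
    {a : β} (ha : a ∈ s) : ∃ b ∈ t, a ≤ b := by
  obtain ⟨b, hab, hb⟩ := s.finite_toSet.exists_le_maximal ha
  exact ⟨b, (ht b).2 ⟨hb.prop, fun c hc hbc => hb.eq_of_le hc hbc⟩, hab⟩

section Laminar

variable {α : Type*}

def IsLaminar (σ : Finset (Finset α)) : Prop :=
  ∀ B ∈ σ, ∀ C ∈ σ, B ⊆ C ∨ C ⊆ B ∨ Disjoint B C

theorem isLaminar_of_pairwiseDisjoint {σ : Finset (Finset α)}
    (hσ : ∀ B ∈ σ, ∀ C ∈ σ, B ≠ C → Disjoint B C) : IsLaminar σ := by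
  intro B hB C hC
  by_cases hBC : B = C
  · exact .inl hBC.subset
  · exact .inr (.inr (hσ B hB C hC hBC))

theorem IsLaminar.union [DecidableEq α] {σ τ : Finset (Finset α)}
    (hσ : IsLaminar σ) (hτ : IsLaminar τ)
    (hστ : ∀ B ∈ σ, ∀ C ∈ τ, B ⊆ C ∨ C ⊆ B ∨ Disjoint B C) : IsLaminar (σ ∪ τ) := by
  intro B hB C hC
  rcases Finset.mem_union.1 hB with hB | hB <;> rcases Finset.mem_union.1 hC with hC | hC
  · exact hσ B hB C hC
  · exact hστ B hB C hC
  · rcases hστ C hC B hB with h | h | h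
    exacts [.inr (.inl h), .inl h, .inr (.inr h.symm)]
  · exact hτ B hB C hC

theorem IsLaminar.disjoint_of_maximal {σ : Finset (Finset α)} (hσ : IsLaminar σ)
    {B C : Finset α} (hB : B ∈ σ) (hBmax : ∀ D ∈ σ, B ⊆ D → B = D)
    (hC : C ∈ σ) (hCmax : ∀ D ∈ σ, C ⊆ D → C = D) (hBC : B ≠ C) : Disjoint B C := by
  rcases hσ B hB C hC with h | h | h
  · exact absurd (hBmax C hC h) hBC
  · exact absurd (hCmax B hB h).symm hBC
  · exact h

end Laminar

section Config

variable {α : Type*} [DecidableEq α] {I J : Finset α} {ρ ρ' τ : Finset (Finset α)}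

theorem IsConfig.of_subset_union (hρ : IsConfig I J ρ) (hρ' : IsConfig I J ρ')
    (hτ : τ ⊆ ρ ∪ ρ') (hτne : τ.Nonempty)
    (hτdisj : ∀ B ∈ τ, ∀ C ∈ τ, B ≠ C → Disjoint B C) : IsConfig I J τ := by
  obtain ⟨-, hρsub, -, hρcard, hρI⟩ := hρ
  obtain ⟨-, hρ'sub, -, hρ'card, hρ'I⟩ := hρ'
  have hmem : ∀ B ∈ τ, B ∈ ρ ∨ B ∈ ρ' := fun B hB => Finset.mem_union.1 (hτ hB)
  refine ⟨hτne, fun B hB => ?_, hτdisj, fun B hB => ?_, fun B hB => ?_⟩ <;>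
    rcases hmem B hB with h | h
  exacts [hρsub B h, hρ'sub B h, hρcard B h, hρ'card B h, hρI B h, hρ'I B h]

theorem IsConfig.isLaminar (hρ : IsConfig I J ρ) : IsLaminar ρ :=
  isLaminar_of_pairwiseDisjoint hρ.2.2.1

end Config

theorem ConfigLT.of_coarser_of_not_configLT {α : Type*} {ρ ρ' τ : Finset (Finset α)}
    (hne : ρ ≠ ρ') (hlt : ¬ ConfigLT ρ ρ')
    (hρ : ∀ B ∈ ρ, ∃ C ∈ τ, B ⊆ C) (hρ' : ∀ B ∈ ρ', ∃ C ∈ τ, B ⊆ C) : ConfigLT τ ρ :=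
  ⟨fun h => hlt ⟨hne, h ▸ hρ'⟩, hρ⟩

theorem stmt_3_general {α : Type*} [DecidableEq α] (I J : Finset α)
    (ρ ρ' ρt : Finset (Finset α))
    (hρ : IsConfig I J ρ) (hρ' : IsConfig I J ρ')
    (hne : ρ ≠ ρ') (h1 : ¬ ConfigLT ρ ρ') (h2 : ¬ ConfigLT ρ' ρ)
    (hnest : ∀ B ∈ ρ, ∀ B' ∈ ρ', B ⊆ B' ∨ B' ⊆ B ∨ Disjoint B B')
    (hρt : ∀ B, B ∈ ρt ↔ B ∈ ρ ∪ ρ' ∧ ∀ C ∈ ρ ∪ ρ', B ⊆ C → B = C) :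
    IsConfig I J ρt ∧ ConfigLT ρt ρ ∧ ConfigLT ρt ρ' := by
  have hcover : ∀ B ∈ ρ ∪ ρ', ∃ C ∈ ρt, B ⊆ C := fun B =>
    Finset.exists_le_of_forall_mem_iff_maximal hρt
  have hcoverρ : ∀ B ∈ ρ, ∃ C ∈ ρt, B ⊆ C := fun B hB => hcover B (Finset.mem_union_left _ hB)
  have hcoverρ' : ∀ B ∈ ρ', ∃ C ∈ ρt, B ⊆ C := fun B hB => hcover B (Finset.mem_union_right _ hB)
  have hlam : IsLaminar (ρ ∪ ρ') := hρ.isLaminar.union hρ'.isLaminar hnest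
  have hdisj : ∀ B ∈ ρt, ∀ C ∈ ρt, B ≠ C → Disjoint B C := fun B hB C hC =>
    hlam.disjoint_of_maximal ((hρt B).1 hB).1 ((hρt B).1 hB).2 ((hρt C).1 hC).1 ((hρt C).1 hC).2
  obtain ⟨B, hB⟩ := hρ.1
  obtain ⟨C, hC, -⟩ := hcoverρ B hB
  refine ⟨hρ.of_subset_union hρ' (fun B hB => ((hρt B).1 hB).1) ⟨C, hC⟩ hdisj, ?_, ?_⟩
  · exact .of_coarser_of_not_configLT hne h1 hcoverρ hcoverρ'
  · exact .of_coarser_of_not_configLT hne.symm h2 hcoverρ' hcoverρ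

/-- if `ρ` and `ρ'` are distinct `≺`-incomparable configurations whose
blocks are pairwise nested or disjoint, then the collection `ρ̃` of the members of
`ρ ∪ ρ'` that are maximal with respect to inclusion is a configuration with
`ρ̃ ≺ ρ` and `ρ̃ ≺ ρ'`. -/
theorem stmt_3 {α : Type*} [DecidableEq α] (I J : Finset α)
    (hIJ : Disjoint I J) (hI : I.Nonempty)
    (ρ ρ' ρt : Finset (Finset α))
    (hρ : IsConfig I J ρ) (hρ' : IsConfig I J ρ')
    (hne : ρ ≠ ρ') (h1 : ¬ ConfigLT ρ ρ') (h2 : ¬ ConfigLT ρ' ρ)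
    (hnest : ∀ B ∈ ρ, ∀ B' ∈ ρ', B ⊆ B' ∨ B' ⊆ B ∨ Disjoint B B')
    (hρt : ∀ B, B ∈ ρt ↔ B ∈ ρ ∪ ρ' ∧ ∀ C ∈ ρ ∪ ρ', B ⊆ C → B = C) :
    IsConfig I J ρt ∧ ConfigLT ρt ρ ∧ ConfigLT ρt ρ' :=
  stmt_3_general I J ρ ρ' ρt hρ hρ' hne h1 h2 hnest hρt
end

section
/- If ρ₁ and ρ₂ are configurations on (I,J) with ρ₁ ≺ ρ₂, then, setting m(ρ) = |ρ| + |I ∖ ⋃ρ| and P(ρ) = J ∖ ⋃ρ, one has m(ρ₁) ≤ m(ρ₂), P(ρ₁) ⊆ P(ρ₂), and (m(ρ₁), P(ρ₁)) ≠ (m(ρ₂), P(ρ₂)). -/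
namespace Finset

variable {α : Type*} [DecidableEq α]

theorem card_eq_card_sdiff_sup_add_sum_card_inter {ρ : Finset (Finset α)}
    (hρ : (ρ : Set (Finset α)).PairwiseDisjoint id) (S : Finset α) :
    #S = #(S \ ρ.sup id) + ∑ B ∈ ρ, #(S ∩ B) := by
  rw [← card_sdiff_add_card_inter S (ρ.sup id), sup_eq_biUnion, inter_biUnion, card_biUnion]
  · rfl
  · exact fun B hB B' hB' hne =>
      (hρ hB hB' hne).mono inter_subset_right inter_subset_right

section Refinement

variable {I J : Finset α} {ρ₁ ρ₂ : Finset (Finset α)}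

theorem sup_id_subset_of_forall_exists_subset (hrefine : ∀ B ∈ ρ₂, ∃ B' ∈ ρ₁, B ⊆ B') :
    ρ₂.sup id ⊆ ρ₁.sup id := by
  intro x hx
  obtain ⟨B, hB, hxB⟩ := mem_sup.mp hx
  obtain ⟨B', hB', hBB'⟩ := hrefine B hB
  exact mem_sup.mpr ⟨B', hB', hBB' hxB⟩

theorem inter_sup_id_eq_sup_filter_subset (hρ₁ : (ρ₁ : Set (Finset α)).PairwiseDisjoint id)
    (hrefine : ∀ B ∈ ρ₂, ∃ B' ∈ ρ₁, B ⊆ B') {B : Finset α} (hB : B ∈ ρ₁) :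
    B ∩ ρ₂.sup id = {B₂ ∈ ρ₂ | B₂ ⊆ B}.sup id := by
  ext x
  simp only [mem_inter, mem_sup, mem_filter, id]
  constructor
  · rintro ⟨hxB, B₂, hB₂, hxB₂⟩
    obtain ⟨B', hB', hB₂B'⟩ := hrefine B₂ hB₂
    have : B' = B := by
      by_contra hne
      exact disjoint_left.mp (hρ₁ hB' hB hne) (hB₂B' hxB₂) hxB
    exact ⟨B₂, ⟨hB₂, this ▸ hB₂B'⟩, hxB₂⟩
  · rintro ⟨B₂, ⟨hB₂, hB₂B⟩, hxB₂⟩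
    exact ⟨hB₂B hxB₂, B₂, hB₂, hxB₂⟩

theorem card_eq_sum_card_filter_subset (hρ₁ : (ρ₁ : Set (Finset α)).PairwiseDisjoint id)
    (hne : ∀ B ∈ ρ₂, B.Nonempty) (hrefine : ∀ B ∈ ρ₂, ∃ B' ∈ ρ₁, B ⊆ B') :
    #ρ₂ = ∑ B ∈ ρ₁, #{B₂ ∈ ρ₂ | B₂ ⊆ B} := by
  have hunique : ∀ B₂ ∈ ρ₂, #{B ∈ ρ₁ | B₂ ⊆ B} = 1 := by
    intro B₂ hB₂
    obtain ⟨B, hB, hB₂B⟩ := hrefine B₂ hB₂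
    obtain ⟨x, hx⟩ := hne B₂ hB₂
    refine card_eq_one.mpr ⟨B, eq_singleton_iff_unique_mem.mpr ⟨mem_filter.mpr ⟨hB, hB₂B⟩, ?_⟩⟩
    intro B' hB'
    obtain ⟨hB'mem, hB₂B'⟩ := mem_filter.mp hB'
    by_contra hne'
    exact disjoint_left.mp (hρ₁ hB'mem hB hne') (hB₂B' hx) (hB₂B hx)
  calc #ρ₂ = ∑ B₂ ∈ ρ₂, #{B ∈ ρ₁ | B₂ ⊆ B} := by
        rw [card_eq_sum_ones]; exact sum_congr rfl fun B₂ hB₂ => (hunique B₂ hB₂).symm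
    _ = ∑ B ∈ ρ₁, #{B₂ ∈ ρ₂ | B₂ ⊆ B} :=
        sum_card_bipartiteAbove_eq_sum_card_bipartiteBelow fun B₂ B : Finset α => B₂ ⊆ B

theorem eq_of_subset_of_forall_exists_subset (hsub : ρ₁ ⊆ ρ₂)
    (hρ₂ : (ρ₂ : Set (Finset α)).PairwiseDisjoint id) (hne : ∀ B ∈ ρ₂, B.Nonempty)
    (hrefine : ∀ B ∈ ρ₂, ∃ B' ∈ ρ₁, B ⊆ B') : ρ₁ = ρ₂ := by
  refine hsub.antisymm fun B hB => ?_
  obtain ⟨B', hB', hBB'⟩ := hrefine B hB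
  obtain ⟨x, hx⟩ := hne B hB
  have : B = B' := by
    by_contra hne'
    exact disjoint_left.mp (hρ₂ hB (hsub hB') hne') hx (hBB' hx)
  exact this ▸ hB'

theorem card_add_card_sdiff_sup_eq_sum
    (hρ₁ : (ρ₁ : Set (Finset α)).PairwiseDisjoint id) (hrefine : ∀ B ∈ ρ₂, ∃ B' ∈ ρ₁, B ⊆ B')
    (hne : ∀ B ∈ ρ₂, B.Nonempty) :
    #ρ₂ + #(I \ ρ₂.sup id) =
      #(I \ ρ₁.sup id) + ∑ B ∈ ρ₁, (#{B₂ ∈ ρ₂ | B₂ ⊆ B} + #((I \ ρ₂.sup id) ∩ B)) := by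
  have hsplit := card_eq_card_sdiff_sup_add_sum_card_inter hρ₁ (I \ ρ₂.sup id)
  rw [sdiff_sdiff_left, sup_eq_right.mpr (sup_id_subset_of_forall_exists_subset hrefine)]
    at hsplit
  rw [card_eq_sum_card_filter_subset hρ₁ hne hrefine, hsplit, sum_add_distrib]
  ring

theorem disjoint_sup_id_of_filter_subset_eq_empty
    (hρ₁ : (ρ₁ : Set (Finset α)).PairwiseDisjoint id) (hrefine : ∀ B ∈ ρ₂, ∃ B' ∈ ρ₁, B ⊆ B')
    {B : Finset α} (hB : B ∈ ρ₁) (hF : {B₂ ∈ ρ₂ | B₂ ⊆ B} = ∅) : Disjoint B (ρ₂.sup id) := by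
  rw [disjoint_iff_inter_eq_empty, inter_sup_id_eq_sup_filter_subset hρ₁ hrefine hB, hF,
    sup_empty]
  rfl

theorem one_le_card_filter_subset_add_card_inter
    (hρ₁ : (ρ₁ : Set (Finset α)).PairwiseDisjoint id) (hrefine : ∀ B ∈ ρ₂, ∃ B' ∈ ρ₁, B ⊆ B')
    {B : Finset α} (hB : B ∈ ρ₁) (hBI : (B ∩ I).Nonempty) :
    1 ≤ #{B₂ ∈ ρ₂ | B₂ ⊆ B} + #((I \ ρ₂.sup id) ∩ B) := by
  rcases eq_empty_or_nonempty {B₂ ∈ ρ₂ | B₂ ⊆ B} with hF | hF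
  · obtain ⟨x, hx⟩ := hBI
    obtain ⟨hxB, hxI⟩ := mem_inter.mp hx
    have hxU :=
      disjoint_left.mp (disjoint_sup_id_of_filter_subset_eq_empty hρ₁ hrefine hB hF) hxB
    have := card_pos.mpr ⟨x, mem_inter.mpr ⟨mem_sdiff.mpr ⟨hxI, hxU⟩, hxB⟩⟩
    omega
  · have := card_pos.mpr hF
    omega

theorem mem_of_card_filter_subset_add_card_inter_le_one
    (hρ₁ : (ρ₁ : Set (Finset α)).PairwiseDisjoint id) (hrefine : ∀ B ∈ ρ₂, ∃ B' ∈ ρ₁, B ⊆ B')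
    (hJ : J ∩ ρ₁.sup id ⊆ ρ₂.sup id) {B : Finset α} (hB : B ∈ ρ₁) (hBIJ : B ⊆ I ∪ J)
    (hBcard : 2 ≤ #B)
    (hd : #{B₂ ∈ ρ₂ | B₂ ⊆ B} + #((I \ ρ₂.sup id) ∩ B) ≤ 1) : B ∈ ρ₂ := by
  have hBJ : B ∩ J ⊆ ρ₂.sup id := fun x hx =>
    hJ (mem_inter.mpr ⟨(mem_inter.mp hx).2, mem_sup.mpr ⟨B, hB, (mem_inter.mp hx).1⟩⟩)
  rcases eq_empty_or_nonempty {B₂ ∈ ρ₂ | B₂ ⊆ B} with hF | hF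
  · have hdisj := disjoint_sup_id_of_filter_subset_eq_empty hρ₁ hrefine hB hF
    have hBsub : B ⊆ (I \ ρ₂.sup id) ∩ B := by
      intro x hxB
      have hxU := disjoint_left.mp hdisj hxB
      rcases mem_union.mp (hBIJ hxB) with hxI | hxJ
      · exact mem_inter.mpr ⟨mem_sdiff.mpr ⟨hxI, hxU⟩, hxB⟩
      · exact absurd (hBJ (mem_inter.mpr ⟨hxB, hxJ⟩)) hxU
    have := card_le_card hBsub
    omega
  · obtain ⟨B₂, hB₂⟩ : ∃ B₂, {B₂ ∈ ρ₂ | B₂ ⊆ B} = {B₂} :=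
      card_eq_one.mp (le_antisymm (by omega) (card_pos.mpr hF))
    have hIB : (I \ ρ₂.sup id) ∩ B = ∅ := card_eq_zero.mp (by have := card_pos.mpr hF; omega)
    have hBU : B ⊆ ρ₂.sup id := by
      intro x hxB
      rcases mem_union.mp (hBIJ hxB) with hxI | hxJ
      · by_contra hxU
        simpa [hIB] using mem_inter.mpr ⟨mem_sdiff.mpr ⟨hxI, hxU⟩, hxB⟩
      · exact hBJ (mem_inter.mpr ⟨hxB, hxJ⟩)
    have hBeq : B = B₂ := by
      rw [← inter_eq_left.mpr hBU, inter_sup_id_eq_sup_filter_subset hρ₁ hrefine hB, hB₂,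
        sup_singleton, id]
    exact hBeq ▸ (mem_filter.mp (hB₂ ▸ mem_singleton_self B₂)).1

end Refinement

end Finset

open Finset

section Configurations

variable {α : Type*} [DecidableEq α] {I J : Finset α}

theorem IsConfig.pairwiseDisjoint {ρ : Finset (Finset α)} (h : IsConfig I J ρ) :
    (ρ : Set (Finset α)).PairwiseDisjoint id :=
  fun _ hB _ hB' hne => h.2.2.1 _ hB _ hB' hne

theorem IsConfig.nonempty_of_mem {ρ : Finset (Finset α)} (h : IsConfig I J ρ) {B : Finset α}
    (hB : B ∈ ρ) : B.Nonempty :=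
  (h.2.2.2.2 B hB).mono inter_subset_left

end Configurations

theorem stmt_5_general {α : Type*} [DecidableEq α] (I J : Finset α)
    (ρ₁ ρ₂ : Finset (Finset α))
    (h₁ : IsConfig I J ρ₁) (h₂ : IsConfig I J ρ₂)
    (hlt : ConfigLT ρ₁ ρ₂) :
    ρ₁.card + (I \ ρ₁.sup id).card ≤ ρ₂.card + (I \ ρ₂.sup id).card ∧
    J \ ρ₁.sup id ⊆ J \ ρ₂.sup id ∧
    (ρ₁.card + (I \ ρ₁.sup id).card, J \ ρ₁.sup id) ≠
      (ρ₂.card + (I \ ρ₂.sup id).card, J \ ρ₂.sup id) := by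
  obtain ⟨hne, hrefine⟩ := hlt
  have hm₁ : #ρ₁ + #(I \ ρ₁.sup id) = #(I \ ρ₁.sup id) + ∑ B ∈ ρ₁, 1 := by
    rw [card_eq_sum_ones, add_comm]
  have hm₂ := card_add_card_sdiff_sup_eq_sum (I := I) h₁.pairwiseDisjoint hrefine
    (fun B => h₂.nonempty_of_mem)
  have hle : ∀ B ∈ ρ₁, 1 ≤ #{B₂ ∈ ρ₂ | B₂ ⊆ B} + #((I \ ρ₂.sup id) ∩ B) :=
    fun B hB => one_le_card_filter_subset_add_card_inter h₁.pairwiseDisjoint hrefine hB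
      (h₁.2.2.2.2 B hB)
  have hsum := sum_le_sum hle
  refine ⟨by omega,
    sdiff_subset_sdiff subset_rfl (sup_id_subset_of_forall_exists_subset hrefine), ?_⟩
  intro heq
  obtain ⟨hm, hP⟩ := Prod.mk.inj heq
  have hJ : J ∩ ρ₁.sup id ⊆ ρ₂.sup id := fun x hx => by
    by_contra hxU
    have : x ∈ J \ ρ₁.sup id := hP ▸ mem_sdiff.mpr ⟨(mem_inter.mp hx).1, hxU⟩
    exact (mem_sdiff.mp this).2 (mem_inter.mp hx).2
  have hd := (sum_eq_sum_iff_of_le hle).mp (by omega)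
  have hsub : ρ₁ ⊆ ρ₂ := fun B hB =>
    mem_of_card_filter_subset_add_card_inter_le_one h₁.pairwiseDisjoint hrefine hJ hB
      (h₁.2.1 B hB) (h₁.2.2.2.1 B hB) (hd B hB).ge
  exact hne (eq_of_subset_of_forall_exists_subset hsub h₂.pairwiseDisjoint
    (fun B => h₂.nonempty_of_mem) hrefine)

/-- if `ρ₁ ≺ ρ₂` are configurations on `(I, J)`, then, with
`m(ρ) = |ρ| + |I \ ⋃ρ|` and `P(ρ) = J \ ⋃ρ`, one has `m(ρ₁) ≤ m(ρ₂)`,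
`P(ρ₁) ⊆ P(ρ₂)`, and `(m(ρ₁), P(ρ₁)) ≠ (m(ρ₂), P(ρ₂))`. -/
theorem stmt_5 {α : Type*} [DecidableEq α] (I J : Finset α)
    (hIJ : Disjoint I J) (hI : I.Nonempty)
    (ρ₁ ρ₂ : Finset (Finset α))
    (h₁ : IsConfig I J ρ₁) (h₂ : IsConfig I J ρ₂)
    (hlt : ConfigLT ρ₁ ρ₂) :
    ρ₁.card + (I \ ρ₁.sup id).card ≤ ρ₂.card + (I \ ρ₂.sup id).card ∧
    J \ ρ₁.sup id ⊆ J \ ρ₂.sup id ∧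
    (ρ₁.card + (I \ ρ₁.sup id).card, J \ ρ₁.sup id) ≠
      (ρ₂.card + (I \ ρ₂.sup id).card, J \ ρ₂.sup id) :=
  stmt_5_general I J ρ₁ ρ₂ h₁ h₂ hlt
end
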